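/- Let κ be a symmetric positive definite kernel and suppose μ_j is a sequence of positive measures of finite energy whose potentials κμ_j decrease pointwise: κμ_{j+1} ≤ κμ_j everywhere. Then (μ_j) is a Cauchy sequence in the energy seminorm: ‖μ_j − μ_k‖_κ² ≤ ‖μ_k‖_κ² − ‖μ_j‖_κ² for j ≥ k, and in particular the energies κ(μ_j, μ_j) form a decreasing convergent sequence. -/
import Mathlib


open MeasureTheory ENNReal Filter Topology

/-- The potential `κμ(x) = ∫ κ(x,y) dμ(y)` in `[0,∞]`. -/
noncomputable def potential {X : Type*} [MeasurableSpace X] (κ : X → X → ℝ≥0∞)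
    (μ : Measure X) (x : X) : ℝ≥0∞ :=
  ∫⁻ y, κ x y ∂μ

/-- The mutual energy `κ(μ,ν) = ∬ κ dμ dν` in `[0,∞]`. -/
noncomputable def mutualEnergy {X : Type*} [MeasurableSpace X] (κ : X → X → ℝ≥0∞)
    (μ ν : Measure X) : ℝ≥0∞ :=
  ∫⁻ x, potential κ ν x ∂μ

/-- The mutual energy as a real number. -/
noncomputable def mutualEnergyR {X : Type*} [MeasurableSpace X] (κ : X → X → ℝ≥0∞)
    (μ ν : Measure X) : ℝ :=
  (mutualEnergy κ μ ν).toReal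

/-- Let `κ` be a symmetric positive definite kernel and `μ_j` a sequence of
positive measures of finite energy whose potentials decrease pointwise:
`κμ_{j+1} ≤ κμ_j` everywhere. Then `(μ_j)` is Cauchy in energy seminorm:
`‖μ_j − μ_k‖² ≤ ‖μ_k‖² − ‖μ_j‖²` for `j ≥ k`; in particular the energies `κ(μ_j,μ_j)` form
a decreasing convergent sequence. -/
theorem cauchy_of_decreasing_potentials {X : Type*} [TopologicalSpace X] [T2Space X]
    [LocallyCompactSpace X] [MeasurableSpace X] [BorelSpace X]
    (κ : X → X → ℝ≥0∞)
    (hlsc : LowerSemicontinuous (fun p : X × X => κ p.1 p.2))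
    (hsym : ∀ x y, κ x y = κ y x)
    (hpd : ∀ μ ν : Measure X, mutualEnergy κ μ μ ≠ ∞ → mutualEnergy κ ν ν ≠ ∞ →
      2 * mutualEnergy κ μ ν ≤ mutualEnergy κ μ μ + mutualEnergy κ ν ν)
    (μ : ℕ → Measure X) (hfin : ∀ j, mutualEnergy κ (μ j) (μ j) ≠ ∞)
    (hdec : ∀ j x, potential κ (μ (j + 1)) x ≤ potential κ (μ j) x) :
    (∀ j k, k ≤ j →
        mutualEnergyR κ (μ j) (μ j) - 2 * mutualEnergyR κ (μ j) (μ k)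
            + mutualEnergyR κ (μ k) (μ k)
          ≤ mutualEnergyR κ (μ k) (μ k) - mutualEnergyR κ (μ j) (μ j)) ∧
      Antitone (fun j => mutualEnergyR κ (μ j) (μ j)) ∧
      ∃ L : ℝ, Tendsto (fun j => mutualEnergyR κ (μ j) (μ j)) atTop (𝓝 L) := by

  -- potentials are antitone in the index
  have hpot : ∀ k j, k ≤ j → ∀ x, potential κ (μ j) x ≤ potential κ (μ k) x := by
    intro k j hkj
    induction j, hkj using Nat.le_induction with
    | base => intro x; exact le_rfl
    | succ n hn ih => intro x; exact (hdec n x).trans (ih x)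
  -- energy ≤ mutual energy
  have hEM : ∀ j k, k ≤ j →
      mutualEnergy κ (μ j) (μ j) ≤ mutualEnergy κ (μ j) (μ k) := by
    intro j k hkj
    exact lintegral_mono fun x => hpot k j hkj x
  -- mutual energies are finite
  have hMfin : ∀ j k, mutualEnergy κ (μ j) (μ k) ≠ ∞ := by
    intro j k
    have h := hpd (μ j) (μ k) (hfin j) (hfin k)
    intro hM
    rw [hM, ENNReal.mul_top (by norm_num)] at h
    exact ENNReal.add_ne_top.mpr ⟨hfin j, hfin k⟩ (top_le_iff.mp h)
  -- energies are antitone in ℝ≥0∞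
  have hEanti : ∀ j k, k ≤ j →
      mutualEnergy κ (μ j) (μ j) ≤ mutualEnergy κ (μ k) (μ k) := by
    intro j k hkj
    have h1 := hEM j k hkj
    have h2 := hpd (μ j) (μ k) (hfin j) (hfin k)
    have : mutualEnergy κ (μ j) (μ j) + mutualEnergy κ (μ j) (μ j)
        ≤ mutualEnergy κ (μ j) (μ j) + mutualEnergy κ (μ k) (μ k) := by
      calc mutualEnergy κ (μ j) (μ j) + mutualEnergy κ (μ j) (μ j)
          = 2 * mutualEnergy κ (μ j) (μ j) := (two_mul _).symm
        _ ≤ 2 * mutualEnergy κ (μ j) (μ k) := by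
            exact mul_le_mul_right h1 2
        _ ≤ _ := h2
    exact (ENNReal.add_le_add_iff_left (hfin j)).mp this
  have hEMR : ∀ j k, k ≤ j →
      mutualEnergyR κ (μ j) (μ j) ≤ mutualEnergyR κ (μ j) (μ k) := by
    intro j k hkj
    exact ENNReal.toReal_mono (hMfin j k) (hEM j k hkj)
  have hanti : Antitone (fun j => mutualEnergyR κ (μ j) (μ j)) := by
    intro k j hkj
    exact ENNReal.toReal_mono (hfin k) (hEanti j k hkj)
  refine ⟨fun j k hkj => ?_, hanti, ?_⟩
  · have := hEMR j k hkj
    linarith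
  · refine ⟨_, tendsto_atTop_ciInf hanti ⟨0, ?_⟩⟩
    rintro x ⟨j, rfl⟩
    exact ENNReal.toReal_nonneg
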